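/- Let I be a subgroup of a direct product Λ × B where Λ is a group, such that I is finitely generated and I ∩ Λ (identifying Λ with Λ × {1}) has finite index in Λ. Then the intersection S = I ∩ B (identifying B with {1} × B) is finitely generated. -/

import Mathlib

/-!
Let `K = I ∩ Λ`. An element `b ∈ B` lies in `I` exactly when some `(a, b) ∈ I` has `a ∈ K`
(divide by `(a, 1) ∈ I`), so `I ∩ B` is the image under the second projection of
`I ∩ (K × B)`. This is a finite-index subgroup of the finitely generated group `I`, hence is
finitely generated by Schreier's lemma, and so is its image.
-/

namespace Subgroup

variable {G : Type*} [Group G]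

theorem FG.map {H : Type*} [Group H] {P : Subgroup G} (hP : P.FG) (f : G →* H) :
    (P.map f).FG := by
  classical
  obtain ⟨S, rfl⟩ := hP
  exact ⟨S.image f, by rw [Finset.coe_image, MonoidHom.map_closure]⟩

theorem FG.inf_of_finiteIndex {P : Subgroup G} (hP : P.FG) (K : Subgroup G) [K.FiniteIndex] :
    (P ⊓ K).FG := by
  have : Group.FG P := (Group.fg_iff_subgroup_fg P).2 hP
  have hKP : (K.subgroupOf P).FG := (Group.fg_iff_subgroup_fg _).1 inferInstance
  simpa only [subgroupOf_map_subtype, inf_comm] using hKP.map P.subtype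

theorem comap_inr_eq_map_snd_inf {Λ B : Type*} [Group Λ] [Group B] (I : Subgroup (Λ × B)) :
    I.comap (MonoidHom.inr Λ B) =
      (I ⊓ (I.comap (MonoidHom.inl Λ B)).comap (MonoidHom.fst Λ B)).map (MonoidHom.snd Λ B) := by
  ext b
  simp only [mem_comap, mem_map, mem_inf, MonoidHom.coe_snd, MonoidHom.coe_fst]
  constructor
  · intro hb
    exact ⟨(1, b), ⟨hb, I.one_mem⟩, rfl⟩
  · rintro ⟨⟨a, b⟩, ⟨hab, ha⟩, rfl⟩
    simpa using I.mul_mem (I.inv_mem ha) hab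

end Subgroup

theorem stmt12 {Λ B : Type*} [Group Λ] [Group B] (I : Subgroup (Λ × B))
    (hfg : I.FG) (hfi : (I.comap (MonoidHom.inl Λ B)).FiniteIndex) :
    (I.comap (MonoidHom.inr Λ B)).FG := by
  have : ((I.comap (MonoidHom.inl Λ B)).comap (MonoidHom.fst Λ B)).FiniteIndex :=
    ⟨by rw [Subgroup.index_comap_of_surjective _ Prod.fst_surjective]; exact hfi.index_ne_zero⟩
  rw [Subgroup.comap_inr_eq_map_snd_inf]
  exact (hfg.inf_of_finiteIndex _).map _
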